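/- For every even positive integer m, the denominator of the Bernoulli number B_m (written in lowest terms) is squarefree, and every prime p dividing this denominator satisfies p ≤ m + 1. -/

import Mathlib

open Finset

namespace VSC

/-- valuation bound: `v_p(k) < k`. -/
lemma val_lt {p k : ℕ} (hp : 2 ≤ p) (hk : 1 ≤ k) : padicValNat p k < k := by
  have h1 : p ^ padicValNat p k ∣ k := pow_padicValNat_dvd
  have h2 : p ^ padicValNat p k ≤ k := Nat.le_of_dvd hk h1
  by_contra h
  push_neg at h
  have h3 : p ^ k ≤ p ^ padicValNat p k := Nat.pow_le_pow_right (by omega) h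
  have h4 : k < 2 ^ k := Nat.lt_two_pow_self
  have h5 : 2 ^ k ≤ p ^ k := Nat.pow_le_pow_left hp k
  omega

/-- stronger valuation bound for odd primes: `v_p(k) ≤ k - 2` when `k ≥ 2`. -/
lemma val_le_sub_two {p k : ℕ} (hp : 3 ≤ p) (hk : 2 ≤ k) : padicValNat p k + 2 ≤ k := by
  have h1 : p ^ padicValNat p k ∣ k := pow_padicValNat_dvd
  have h2 : p ^ padicValNat p k ≤ k := Nat.le_of_dvd (by omega) h1
  by_contra h
  push_neg at h
  have hv : k - 1 ≤ padicValNat p k := by omega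
  have h3 : p ^ (k - 1) ≤ p ^ padicValNat p k := Nat.pow_le_pow_right (by omega) hv
  have h4 : k - 1 < 2 ^ (k - 1) := Nat.lt_two_pow_self
  have h5 : 2 ^ (k - 1) < 3 ^ (k - 1) := by
    apply Nat.pow_lt_pow_left (by norm_num) (by omega)
  have h6 : 3 ^ (k - 1) ≤ p ^ (k - 1) := Nat.pow_le_pow_left hp _
  omega

lemma norm_pow_div {p : ℕ} (hp : p.Prime) {k : ℕ} (hk : 1 ≤ k) :
    padicNorm p ((p : ℚ) ^ k / (k : ℚ)) = (p : ℚ) ^ ((padicValNat p k : ℤ) - k) := by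
  have : Fact p.Prime := ⟨hp⟩
  have hp0 : (p : ℚ) ≠ 0 := by exact_mod_cast hp.ne_zero
  have hk0 : (k : ℚ) ≠ 0 := by positivity
  have hq : (p : ℚ) ^ k / (k : ℚ) ≠ 0 := by positivity
  rw [padicNorm.eq_zpow_of_nonzero hq, padicValRat.div (by positivity) hk0]
  rw [padicValRat.pow (p : ℚ), padicValRat.self hp.one_lt]
  rw [← padicValRat.of_nat (p := p) (n := k)]
  congr 1
  push_cast
  ring

lemma norm_pow_div_le {p : ℕ} (hp : p.Prime) {k : ℕ} (hk : 1 ≤ k) :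
    padicNorm p ((p : ℚ) ^ k / (k : ℚ)) ≤ (p : ℚ) ^ (-1 : ℤ) := by
  rw [norm_pow_div hp hk]
  apply zpow_le_zpow_right₀ (by exact_mod_cast hp.one_lt.le)
  have := val_lt hp.two_le hk
  omega

lemma norm_pow_div_le' {p : ℕ} (hp : p.Prime) (hp3 : 3 ≤ p) {k : ℕ} (hk : 2 ≤ k) :
    padicNorm p ((p : ℚ) ^ k / (k : ℚ)) ≤ (p : ℚ) ^ (-2 : ℤ) := by
  rw [norm_pow_div hp (by omega)]
  apply zpow_le_zpow_right₀ (by exact_mod_cast hp.one_lt.le)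
  have := val_le_sub_two hp3 hk
  omega

/-- Faulhaber rearranged: `p * B m = S_m(p) - ∑_{i<m} B_i C(m,i) p^{m+1-i}/(m+1-i)`. -/
lemma key {p : ℕ} (m : ℕ) (hp : 1 ≤ p) :
    (p : ℚ) * bernoulli m =
      (∑ k ∈ range p, (k : ℚ) ^ m) -
        ∑ i ∈ range m,
          bernoulli i * (m.choose i : ℚ) * ((p : ℚ) ^ (m + 1 - i) / ((m + 1 - i : ℕ) : ℚ)) := by
  have h := sum_range_pow p m
  rw [Finset.sum_range_succ] at h
  have hm1 : ((m : ℚ) + 1) ≠ 0 := by positivity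
  have hlast : bernoulli m * (((m + 1).choose m : ℕ) : ℚ) * (p : ℚ) ^ (m + 1 - m) / ((m : ℚ) + 1)
      = (p : ℚ) * bernoulli m := by
    rw [Nat.choose_succ_self_right, Nat.add_sub_cancel_left]
    push_cast
    field_simp
  have hterm : ∀ i ∈ range m,
      bernoulli i * (((m + 1).choose i : ℕ) : ℚ) * (p : ℚ) ^ (m + 1 - i) / ((m : ℚ) + 1)
        = bernoulli i * (m.choose i : ℚ) * ((p : ℚ) ^ (m + 1 - i) / ((m + 1 - i : ℕ) : ℚ)) := by
    intro i hi
    rw [mem_range] at hi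
    have hc : ((m.choose i : ℕ) : ℚ) * ((m : ℚ) + 1)
        = (((m + 1).choose i : ℕ) : ℚ) * ((m + 1 - i : ℕ) : ℚ) := by
      have := Nat.choose_mul_succ_eq m i
      exact_mod_cast congrArg (Nat.cast : ℕ → ℚ) this
    have hmi : ((m + 1 - i : ℕ) : ℚ) ≠ 0 := by
      have : 0 < m + 1 - i := by omega
      positivity
    have hdiv : (((m + 1).choose i : ℕ) : ℚ) / ((m : ℚ) + 1)
        = (m.choose i : ℚ) / ((m + 1 - i : ℕ) : ℚ) := by
      rw [div_eq_div_iff hm1 hmi]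
      linarith [hc]
    calc bernoulli i * (((m + 1).choose i : ℕ) : ℚ) * (p : ℚ) ^ (m + 1 - i) / ((m : ℚ) + 1)
        = bernoulli i * (p : ℚ) ^ (m + 1 - i) * ((((m + 1).choose i : ℕ) : ℚ) / ((m : ℚ) + 1)) := by
          ring
      _ = bernoulli i * (p : ℚ) ^ (m + 1 - i) * ((m.choose i : ℚ) / ((m + 1 - i : ℕ) : ℚ)) := by
          rw [hdiv]
      _ = bernoulli i * (m.choose i : ℚ) * ((p : ℚ) ^ (m + 1 - i) / ((m + 1 - i : ℕ) : ℚ)) := by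
          ring
  rw [Finset.sum_congr rfl hterm, hlast] at h
  linarith [h]

lemma norm_bernoulli_le {p : ℕ} (hp : p.Prime) (m : ℕ) : padicNorm p (bernoulli m) ≤ p := by
  have : Fact p.Prime := ⟨hp⟩
  induction m using Nat.strong_induction_on with
  | _ m ih =>
  have hp0 : (0 : ℚ) < p := by exact_mod_cast hp.pos
  have h1 : padicNorm p ((p : ℚ) * bernoulli m) ≤ 1 := by
    rw [key m hp.pos]
    · refine le_trans padicNorm.sub (max_le ?_ ?_)
      · have hS : (∑ k ∈ range p, (k : ℚ) ^ m) = ((∑ k ∈ range p, k ^ m : ℕ) : ℚ) := by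
          push_cast; ring
        rw [hS]; exact padicNorm.of_nat _
      · apply padicNorm.sum_le' ?_ zero_le_one
        intro i hi
        rw [mem_range] at hi
        rw [padicNorm.mul, padicNorm.mul]
        have hB : padicNorm p (bernoulli i) ≤ p := ih i hi
        have hC : padicNorm p ((m.choose i : ℚ)) ≤ 1 := padicNorm.of_nat _
        have hD : padicNorm p ((p : ℚ) ^ (m + 1 - i) / ((m + 1 - i : ℕ) : ℚ))
            ≤ (p : ℚ) ^ (-1 : ℤ) := norm_pow_div_le hp (by omega)
        calc padicNorm p (bernoulli i) * padicNorm p ((m.choose i : ℚ)) *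
              padicNorm p ((p : ℚ) ^ (m + 1 - i) / ((m + 1 - i : ℕ) : ℚ))
            ≤ (p : ℚ) * 1 * (p : ℚ) ^ (-1 : ℤ) := by
              gcongr <;> first | exact padicNorm.nonneg _ | positivity
          _ = 1 := by
              rw [zpow_neg_one]
              field_simp
  rw [padicNorm.mul, padicNorm.padicNorm_p_of_prime] at h1
  rw [inv_mul_le_iff₀ (by positivity : (0:ℚ) < (p:ℚ))] at h1
  simpa using h1

lemma dvd_sum_pow {p : ℕ} (hp : p.Prime) {m : ℕ} (h : ¬(p - 1) ∣ m) :
    p ∣ ∑ k ∈ range p, k ^ m := by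
  have : Fact p.Prime := ⟨hp⟩
  have hm0 : m ≠ 0 := by rintro rfl; exact h (dvd_zero _)
  rw [← ZMod.natCast_eq_zero_iff]
  push_cast
  have h1 : ∑ k ∈ range p, (k : ZMod p) ^ m = ∑ x : ZMod p, x ^ m := by
    refine Finset.sum_nbij' (fun k => (k : ZMod p)) (fun x => x.val) ?_ ?_ ?_ ?_ ?_
    · intro a _; exact mem_univ _
    · intro a _; rw [mem_range]; exact ZMod.val_lt a
    · intro a ha; rw [mem_range] at ha; exact ZMod.val_cast_of_lt ha
    · intro a _; exact ZMod.natCast_zmod_val a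
    · intro a _; rfl
  rw [h1]
  have h2 : ∑ x : ZMod p, x ^ m = ∑ x : (ZMod p)ˣ, ((x : ZMod p)) ^ m := by
    classical
    have h0 : (univ : Finset (ZMod p)) = insert 0 (univ \ {0}) := by
      ext x; by_cases hx : x = 0 <;> simp [hx]
    rw [h0, Finset.sum_insert (by simp), zero_pow hm0, zero_add]
    refine Finset.sum_nbij' (fun x : ZMod p => if hx : x = 0 then 1 else Units.mk0 x hx)
      (fun u : (ZMod p)ˣ => (u : ZMod p)) ?_ ?_ ?_ ?_ ?_
    · intro a _; exact mem_univ _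
    · intro u _; simp [Units.ne_zero u]
    · intro a ha
      simp only [mem_sdiff, mem_singleton] at ha
      simp [ha.2]
    · intro u _; simp [Units.ne_zero u]
    · intro a ha
      simp only [mem_sdiff, mem_singleton] at ha
      simp [ha.2]
  rw [h2]
  have h3 := FiniteField.sum_pow_units (ZMod p) m
  rw [ZMod.card] at h3
  rw [h3, if_neg h]

lemma norm_bernoulli_le_one {p : ℕ} (hp : p.Prime) {m : ℕ} (hm0 : 0 < m)
    (h : ¬(p - 1) ∣ m) : padicNorm p (bernoulli m) ≤ 1 := by
  have : Fact p.Prime := ⟨hp⟩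
  have hp3 : 3 ≤ p := by
    have h2 := hp.two_le
    rcases Nat.lt_or_ge p 3 with hlt | hge
    · interval_cases p
      exact absurd (by norm_num : (2 : ℕ) - 1 ∣ m) h
    · exact hge
  have hp0 : (0 : ℚ) < p := by exact_mod_cast hp.pos
  have h1 : padicNorm p ((p : ℚ) * bernoulli m) ≤ (p : ℚ) ^ (-1 : ℤ) := by
    rw [key m hp.pos]
    refine le_trans padicNorm.sub (max_le ?_ ?_)
    · have hS : (∑ k ∈ range p, (k : ℚ) ^ m) = ((∑ k ∈ range p, k ^ m : ℕ) : ℚ) := by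
        push_cast; ring
      rw [hS]
      have hd := dvd_sum_pow hp h
      have hz : ((p ^ 1 : ℕ) : ℤ) ∣ ((∑ k ∈ range p, k ^ m : ℕ) : ℤ) := by
        rw [pow_one]; exact_mod_cast hd
      have := padicNorm.dvd_iff_norm_le.mp hz
      simpa using this
    · apply padicNorm.sum_le' ?_ (by positivity)
      intro i hi
      rw [mem_range] at hi
      rw [padicNorm.mul, padicNorm.mul]
      have hB : padicNorm p (bernoulli i) ≤ p := norm_bernoulli_le hp i
      have hC : padicNorm p ((m.choose i : ℚ)) ≤ 1 := padicNorm.of_nat _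
      have hD : padicNorm p ((p : ℚ) ^ (m + 1 - i) / ((m + 1 - i : ℕ) : ℚ))
          ≤ (p : ℚ) ^ (-2 : ℤ) := norm_pow_div_le' hp hp3 (by omega)
      calc padicNorm p (bernoulli i) * padicNorm p ((m.choose i : ℚ)) *
            padicNorm p ((p : ℚ) ^ (m + 1 - i) / ((m + 1 - i : ℕ) : ℚ))
          ≤ (p : ℚ) * 1 * (p : ℚ) ^ (-2 : ℤ) := by
            gcongr <;> exact padicNorm.nonneg _
        _ = (p : ℚ) ^ (-1 : ℤ) := by
            rw [show ((-2 : ℤ)) = -1 + -1 by norm_num, zpow_add₀ (ne_of_gt hp0)]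
            rw [zpow_neg_one]
            field_simp
  rw [padicNorm.mul, padicNorm.padicNorm_p_of_prime] at h1
  rw [zpow_neg_one] at h1
  rw [inv_mul_le_iff₀ (by positivity : (0:ℚ) < (p:ℚ))] at h1
  have : (p : ℚ) * (p : ℚ)⁻¹ = 1 := by field_simp
  calc padicNorm p (bernoulli m) ≤ (p:ℚ) * (p:ℚ)⁻¹ := h1
    _ = 1 := this

lemma norm_ge_of_dvd_den {p : ℕ} (hp : p.Prime) {r : ℚ} {n : ℕ} (hn : 1 ≤ n)
    (h : p ^ n ∣ r.den) : (p : ℚ) ^ n ≤ padicNorm p r := by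
  have : Fact p.Prime := ⟨hp⟩
  have hr : r ≠ 0 := by
    rintro rfl
    have h1 : p ^ n ∣ 1 := by simpa using h
    have h2 : p ^ n ≤ 1 := Nat.le_of_dvd one_pos h1
    have h3 : p ≤ p ^ n := Nat.le_self_pow (by omega) p
    have := hp.two_le
    omega
  have hden0 : r.den ≠ 0 := r.den_pos.ne'
  have hv : (n : ℤ) ≤ (padicValNat p r.den : ℤ) := by
    exact_mod_cast (padicValNat_dvd_iff_le hden0).mp h
  have hnum : padicValInt p r.num = 0 := by
    apply padicValInt.eq_zero_of_not_dvd
    intro hdvd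
    have hpd : p ∣ r.den := (dvd_pow_self p (by omega : n ≠ 0)).trans h
    have hnd : p ∣ r.num.natAbs := Int.natCast_dvd.mp hdvd
    have hcop := r.reduced
    have hdg : p ∣ Nat.gcd r.num.natAbs r.den := Nat.dvd_gcd hnd hpd
    rw [Nat.Coprime] at hcop
    rw [hcop] at hdg
    have := Nat.le_of_dvd one_pos hdg
    have := hp.two_le
    omega
  have hval : padicValRat p r ≤ -(n : ℤ) := by
    rw [padicValRat, hnum]
    omega
  rw [padicNorm.eq_zpow_of_nonzero hr]
  have h1 : (n : ℤ) ≤ -padicValRat p r := by omega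
  calc (p : ℚ) ^ n = (p : ℚ) ^ (n : ℤ) := (zpow_natCast _ _).symm
    _ ≤ (p : ℚ) ^ (-padicValRat p r) :=
        zpow_le_zpow_right₀ (by exact_mod_cast hp.one_lt.le) h1

end VSC

/-- Clausen–von Staudt consequence: for even positive `m`, the denominator of the
Bernoulli number `B_m` is squarefree and each of its prime factors is at most `m+1`. -/
theorem stmt_5 (m : ℕ) (hm : Even m) (hm0 : 0 < m) :
    Squarefree (bernoulli m).den ∧
      ∀ p : ℕ, p.Prime → p ∣ (bernoulli m).den → p ≤ m + 1 := by
  refine ⟨?_, ?_⟩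
  · rw [Nat.squarefree_iff_prime_squarefree]
    intro q hq hdvd
    have hq' : Nat.Prime q := hq
    have h2 : q ^ 2 ∣ (bernoulli m).den := by rw [pow_two]; exact hdvd
    have hge := VSC.norm_ge_of_dvd_den hq' (by norm_num) h2
    have hle := VSC.norm_bernoulli_le hq' m
    have hq2 : (2 : ℚ) ≤ (q : ℚ) := by exact_mod_cast hq'.two_le
    nlinarith [le_trans hge hle]
  · intro q hq hdvd
    by_contra hgt
    push_neg at hgt
    have hnd : ¬(q - 1) ∣ m := by
      intro hd
      have := Nat.le_of_dvd hm0 hd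
      have := hq.two_le
      omega
    have h1 := VSC.norm_bernoulli_le_one hq hm0 hnd
    have h2 := VSC.norm_ge_of_dvd_den hq le_rfl (by simpa using hdvd)
    have hle : (q : ℚ) ≤ 1 := by simpa using le_trans h2 h1
    have hq2 : (2 : ℚ) ≤ (q : ℚ) := by exact_mod_cast hq.two_le
    linarith
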